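/- Orthogonality at the top: with C(n; z₁, z₂, 0) = (−1)^{z₁} q^{n(1−n)/2 − z₁(p+1) + n p₂} ( [n]! [2p₁−z₁; n−z₁]! [2p₂−z₂; n−z₂]! / ([2p+n+1; n]! [z₁]! [z₂]!) )^{1/2} where p = p₁+p₂−n and z₂ = n−z₁, one has ∑_{z₁=0}^{n} C(n; z₁, n−z₁, 0)² = 1, as a consequence of the q-binomial identity ∑_k [α+n−k choose n−k]_q [β+k choose k]_q q^{−k(α+β+2)} = [α+β+n+1 choose n]_q q^{−n(1+β)} with α = 2p₁−n, β = 2p₂−n. -/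

import Mathlib

/-!
With `α = 2p₁ - n`, `β = 2p₂ - n`, `k = z₁` and `j = n - z₁`, the summand is
`q^{j(β+1) - k(α+1)} [α+j choose j] [β+k choose k] / [α+β+n+1 choose n]`, so the claim is the
q-Chu–Vandermonde identity `S n = [α+β+n+1 choose n]` for the sum `S n` of the numerators over
`k + j = n`. Both sides satisfy `[n+1] X (n+1) = [α+β+n+2] X n`. For `S`, split
`[k+j] = q^k [j] + q^{-j} [k]` in `[n+1] S (n+1)` and shift each half back to `k + j = n`; by the
absorption rule `[j+1] [x+1 choose j+1] = [x+1] [x choose j]` the two halves recombine term by term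
through `[α+β+k+j+2] = q^{β+k+1} [α+j+1] + q^{-(α+j+1)} [β+k+1]`.
-/

open Finset

/-- `q^x` for complex exponent, via `exp (x log q)`. -/
noncomputable def Qp (q x : ℂ) : ℂ := Complex.exp (x * Complex.log q)

/-- q-integer `[x]_q = (q^x - q^{-x})/(q - q⁻¹)`. -/
noncomputable def qint (q x : ℂ) : ℂ := (Qp q x - Qp q (-x)) / (q - q⁻¹)

/-- q-factorial `[n]_q! = ∏_{k=1}^n [k]_q`. -/
noncomputable def qfact (q : ℂ) (n : ℕ) : ℂ := ∏ k ∈ Finset.Icc 1 n, qint q (k : ℂ)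

/-- q-binomial coefficient for natural arguments, `[m]!/([m-k]![k]!)`. -/
noncomputable def qchoose (q : ℂ) (m k : ℕ) : ℂ := qfact q m / (qfact q (m - k) * qfact q k)

/-- falling q-factorial `[α; k]! = ∏_{j=0}^{k-1} [α-j]_q`. -/
noncomputable def qfall (q α : ℂ) (k : ℕ) : ℂ := ∏ j ∈ Finset.range k, qint q (α - (j : ℂ))

/-- generalized q-binomial `[α choose k]_q = [α;k]!/[k]!`. -/
noncomputable def qbinom (q α : ℂ) (k : ℕ) : ℂ := qfall q α k / qfact q k

lemma Qp_add (q x y : ℂ) : Qp q (x + y) = Qp q x * Qp q y := by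
  simp only [Qp, add_mul, Complex.exp_add]

lemma Qp_neg (q x : ℂ) : Qp q (-x) = (Qp q x)⁻¹ := by
  simp only [Qp, neg_mul, Complex.exp_neg]

lemma Qp_ne_zero (q x : ℂ) : Qp q x ≠ 0 := Complex.exp_ne_zero _

lemma qint_zero (q : ℂ) : qint q 0 = 0 := by
  simp only [qint, neg_zero, sub_self, zero_div]

lemma qint_add (q a b : ℂ) : qint q (a + b) = Qp q b * qint q a + Qp q (-a) * qint q b := by
  simp only [qint, Qp_neg, Qp_add]
  field_simp [Qp_ne_zero]
  ring

lemma qfact_succ (q : ℂ) (k : ℕ) : qfact q (k + 1) = qfact q k * qint q ((k : ℂ) + 1) := by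
  rw [qfact, qfact, Finset.prod_Icc_succ_top (Nat.le_add_left 1 k), Nat.cast_succ]

lemma qfact_ne_zero {q : ℂ} (hq : ∀ m : ℕ, 1 ≤ m → qint q (m : ℂ) ≠ 0) (k : ℕ) :
    qfact q k ≠ 0 :=
  Finset.prod_ne_zero_iff.mpr fun m hm => hq m (Finset.mem_Icc.mp hm).1

lemma qfall_succ (q x : ℂ) (k : ℕ) :
    qfall q (x + 1) (k + 1) = qint q (x + 1) * qfall q x k := by
  rw [qfall, qfall, Finset.prod_range_succ', Nat.cast_zero, sub_zero, mul_comm]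
  congr 1
  refine Finset.prod_congr rfl fun j _ => ?_
  push_cast
  ring_nf

lemma qint_succ_mul_qbinom_succ {q : ℂ} (x : ℂ) {k : ℕ} (hk : qint q ((k : ℂ) + 1) ≠ 0) :
    qint q ((k : ℂ) + 1) * qbinom q (x + 1) (k + 1) = qint q (x + 1) * qbinom q x k := by
  rw [qbinom, qbinom, qfall_succ, qfact_succ]
  field_simp

noncomputable def qVandermondeTerm (q α β : ℂ) (k j : ℕ) : ℂ :=
  Qp q (j * (β + 1) - k * (α + 1)) * qbinom q (α + j) j * qbinom q (β + k) k

lemma qVandermondeTerm_contiguous {q : ℂ} (α β : ℂ) {k j : ℕ}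
    (hj : qint q ((j : ℂ) + 1) ≠ 0) (hk : qint q ((k : ℂ) + 1) ≠ 0) :
    Qp q k * qint q ((j : ℂ) + 1) * qVandermondeTerm q α β k (j + 1) +
        Qp q (-j) * qint q ((k : ℂ) + 1) * qVandermondeTerm q α β (k + 1) j =
      qint q (α + β + k + j + 2) * qVandermondeTerm q α β k j := by
  set E := Qp q (j * (β + 1) - k * (α + 1))
  have hE₁ : Qp q k * Qp q ((j + 1 : ℕ) * (β + 1) - k * (α + 1)) = Qp q (β + k + 1) * E := by
    rw [← Qp_add, ← Qp_add]; push_cast; ring_nf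
  have hE₂ :
      Qp q (-j) * Qp q (j * (β + 1) - (k + 1 : ℕ) * (α + 1)) = Qp q (-(α + j + 1)) * E := by
    rw [← Qp_add, ← Qp_add]; push_cast; ring_nf
  have hα := qint_succ_mul_qbinom_succ (α + j) hj
  have hβ := qint_succ_mul_qbinom_succ (β + k) hk
  have hsum : qint q (α + β + k + j + 2) =
      Qp q (β + k + 1) * qint q (α + j + 1) + Qp q (-(α + j + 1)) * qint q (β + k + 1) := by
    rw [← qint_add]; ring_nf
  simp only [qVandermondeTerm, Nat.cast_succ, ← add_assoc] at *
  set X := qbinom q (α + j) j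
  set Y := qbinom q (β + k) k
  linear_combination (qint q (j + 1) * qbinom q (α + j + 1) (j + 1) * Y) * hE₁
    + (Qp q (β + k + 1) * E * Y) * hα
    + (X * qint q (k + 1) * qbinom q (β + k + 1) (k + 1)) * hE₂
    + (Qp q (-(α + j + 1)) * E * X) * hβ - (E * X * Y) * hsum

open Finset.Nat in
lemma qint_succ_mul_sum_antidiagonal_qVandermondeTerm {q : ℂ} (α β : ℂ)
    (hq : ∀ m : ℕ, 1 ≤ m → qint q (m : ℂ) ≠ 0) (n : ℕ) :
    qint q ((n : ℂ) + 1) * ∑ p ∈ antidiagonal (n + 1), qVandermondeTerm q α β p.1 p.2 =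
      qint q (α + β + n + 2) * ∑ p ∈ antidiagonal n, qVandermondeTerm q α β p.1 p.2 := by
  have hsucc (m : ℕ) : qint q ((m : ℂ) + 1) ≠ 0 := by exact_mod_cast hq (m + 1) m.succ_pos
  calc qint q ((n : ℂ) + 1) * ∑ p ∈ antidiagonal (n + 1), qVandermondeTerm q α β p.1 p.2
      = ∑ p ∈ antidiagonal (n + 1),
          qint q ((p.2 : ℂ) + p.1) * qVandermondeTerm q α β p.1 p.2 := by
        rw [mul_sum]
        refine sum_congr rfl fun p hp => ?_
        have hsum : (p.2 : ℂ) + p.1 = n + 1 := by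
          exact_mod_cast (add_comm p.2 p.1).trans (mem_antidiagonal.mp hp)
        rw [hsum]
    _ = ∑ p ∈ antidiagonal (n + 1), Qp q p.1 * qint q p.2 * qVandermondeTerm q α β p.1 p.2 +
          ∑ p ∈ antidiagonal (n + 1),
            Qp q (-p.2) * qint q p.1 * qVandermondeTerm q α β p.1 p.2 := by
        rw [← sum_add_distrib]
        exact sum_congr rfl fun p _ => by rw [qint_add, add_mul]
    _ = ∑ p ∈ antidiagonal n,
            Qp q p.1 * qint q ((p.2 : ℂ) + 1) * qVandermondeTerm q α β p.1 (p.2 + 1) +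
          ∑ p ∈ antidiagonal n, Qp q (-p.2) * qint q ((p.1 : ℂ) + 1) *
            qVandermondeTerm q α β (p.1 + 1) p.2 := by
        rw [sum_antidiagonal_succ', sum_antidiagonal_succ]
        simp only [Nat.cast_zero, Nat.cast_succ, qint_zero, mul_zero, zero_mul, zero_add]
    _ = ∑ p ∈ antidiagonal n,
          qint q (α + β + p.1 + p.2 + 2) * qVandermondeTerm q α β p.1 p.2 := by
        rw [← sum_add_distrib]
        exact sum_congr rfl fun p _ => qVandermondeTerm_contiguous α β (hsucc _) (hsucc _)
    _ = qint q (α + β + n + 2) * ∑ p ∈ antidiagonal n, qVandermondeTerm q α β p.1 p.2 := by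
        rw [mul_sum]
        refine sum_congr rfl fun p hp => ?_
        have hsum : (p.1 : ℂ) + p.2 = n := by exact_mod_cast mem_antidiagonal.mp hp
        rw [add_assoc (α + β), hsum]

theorem sum_antidiagonal_qVandermondeTerm {q : ℂ} (α β : ℂ)
    (hq : ∀ m : ℕ, 1 ≤ m → qint q (m : ℂ) ≠ 0) (n : ℕ) :
    ∑ p ∈ antidiagonal n, qVandermondeTerm q α β p.1 p.2 = qbinom q (α + β + n + 1) n := by
  induction n with
  | zero => simp [qVandermondeTerm, qbinom, qfall, qfact, Qp]
  | succ n ih =>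
    have hn : qint q ((n : ℂ) + 1) ≠ 0 := by exact_mod_cast hq (n + 1) n.succ_pos
    apply mul_left_cancel₀ hn
    rw [qint_succ_mul_sum_antidiagonal_qVandermondeTerm α β hq, ih, Nat.cast_succ,
      show α + β + (n + 1) + 1 = α + β + n + 1 + 1 by ring, qint_succ_mul_qbinom_succ _ hn]
    ring_nf

theorem cgc_top_orthogonality_general (q p₁ p₂ : ℂ) (n : ℕ)
    (hgen : ∀ k : ℕ, 1 ≤ k → qint q (k : ℂ) ≠ 0)
    (hden : qfall q (2 * (p₁ + p₂ - (n : ℂ)) + (n : ℂ) + 1) n ≠ 0) :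
    ∑ z₁ ∈ Finset.range (n + 1),
        Qp q ((n : ℂ) * (1 - (n : ℂ)) - 2 * (z₁ : ℂ) * ((p₁ + p₂ - (n : ℂ)) + 1) +
            2 * (n : ℂ) * p₂) *
          qfact q n * qfall q (2 * p₁ - (z₁ : ℂ)) (n - z₁) *
          qfall q (2 * p₂ - (n : ℂ) + (z₁ : ℂ)) z₁ /
          (qfall q (2 * (p₁ + p₂ - (n : ℂ)) + (n : ℂ) + 1) n *
            qfact q z₁ * qfact q (n - z₁)) = 1 := by
  have htop : 2 * p₁ - n + (2 * p₂ - n) + n + 1 = 2 * (p₁ + p₂ - n) + n + 1 := by ring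
  have hterm : ∀ z ∈ range (n + 1),
      Qp q (n * (1 - n) - 2 * z * ((p₁ + p₂ - n) + 1) + 2 * n * p₂) *
          qfact q n * qfall q (2 * p₁ - z) (n - z) * qfall q (2 * p₂ - n + z) z /
          (qfall q (2 * (p₁ + p₂ - n) + n + 1) n * qfact q z * qfact q (n - z)) =
        qVandermondeTerm q (2 * p₁ - n) (2 * p₂ - n) z (n - z) /
          qbinom q (2 * p₁ - n + (2 * p₂ - n) + n + 1) n := by
    intro z hz
    rw [qVandermondeTerm, qbinom, qbinom, qbinom, htop,
      Nat.cast_sub (Nat.lt_succ_iff.mp (mem_range.mp hz)),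
      show 2 * p₁ - n + (n - z) = 2 * p₁ - z by ring,
      show (n - z) * (2 * p₂ - n + 1) - z * (2 * p₁ - n + 1) =
        n * (1 - n) - 2 * z * ((p₁ + p₂ - n) + 1) + 2 * n * p₂ by ring, div_div_eq_mul_div]
    ring
  have hbinom : qbinom q (2 * p₁ - n + (2 * p₂ - n) + n + 1) n ≠ 0 := by
    rw [qbinom, htop]
    exact div_ne_zero hden (qfact_ne_zero hgen n)
  rw [sum_congr rfl hterm, ← sum_div,
    ← Nat.sum_antidiagonal_eq_sum_range_succ (qVandermondeTerm q (2 * p₁ - n) (2 * p₂ - n)),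
    sum_antidiagonal_qVandermondeTerm _ _ hgen, div_self hbinom]

theorem cgc_top_orthogonality (q p₁ p₂ : ℂ) (n : ℕ) (hq : q ≠ 0) (hq2 : q ^ 2 ≠ 1)
    (hgen : ∀ k : ℕ, 1 ≤ k → qint q (k : ℂ) ≠ 0)
    (hden : qfall q (2 * (p₁ + p₂ - (n : ℂ)) + (n : ℂ) + 1) n ≠ 0) :
    ∑ z₁ ∈ Finset.range (n + 1),
        Qp q ((n : ℂ) * (1 - (n : ℂ)) - 2 * (z₁ : ℂ) * ((p₁ + p₂ - (n : ℂ)) + 1) +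
            2 * (n : ℂ) * p₂) *
          qfact q n * qfall q (2 * p₁ - (z₁ : ℂ)) (n - z₁) *
          qfall q (2 * p₂ - (n : ℂ) + (z₁ : ℂ)) z₁ /
          (qfall q (2 * (p₁ + p₂ - (n : ℂ)) + (n : ℂ) + 1) n *
            qfact q z₁ * qfact q (n - z₁)) = 1 :=
  cgc_top_orthogonality_general q p₁ p₂ n hgen hden
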